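/- arXiv:2603.17099 — 2 statements merged into one kernel-verified Lean document; each statement's English description precedes it below -/
import Mathlib

section
/- Concatenating the segments produced by the greedy grouping of a bijection π reconstructs the output vector: if out i = in (π i) for all i, then out equals the concatenation (in index order) of the slices in[π(iₖ) .. π(jₖ)] over the emitted segments [iₖ, jₖ]. -/
/-- Extend `j` as long as `j+1 < N` and `π (j+1) = π j + 1` (Phase 2, inner loop). -/
def runAux (π : ℕ → ℕ) (N : ℕ) : ℕ → ℕ → ℕ
  | 0, j => j
  | fuel+1, j => if j + 1 < N ∧ π (j+1) = π j + 1 then runAux π N fuel (j+1) else j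

/-- Greedy grouping (Phase 2): emit segment `[i, runAux i]`, continue at its end + 1. -/
def greedyAux (π : ℕ → ℕ) (N : ℕ) : ℕ → ℕ → List (ℕ × ℕ)
  | 0, _ => []
  | fuel+1, i =>
    if i < N then
      (i, runAux π N (N - i) i) :: greedyAux π N fuel (runAux π N (N - i) i + 1)
    else []

theorem runAux_le (π : ℕ → ℕ) (N : ℕ) : ∀ fuel j, j ≤ runAux π N fuel j
  | 0, j => le_refl j
  | fuel+1, j => by
    simp only [runAux]
    split
    · exact le_trans (Nat.le_succ j) (runAux_le π N fuel (j+1))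
    · exact le_refl j

theorem runAux_lt (π : ℕ → ℕ) (N : ℕ) : ∀ fuel j, j < N → runAux π N fuel j < N
  | 0, j, h => h
  | fuel+1, j, h => by
    simp only [runAux]
    split
    · exact runAux_lt π N fuel (j+1) (by omega)
    · exact h

theorem runAux_chain (π : ℕ → ℕ) (N : ℕ) :
    ∀ fuel j k, j ≤ k → k ≤ runAux π N fuel j → π k = π j + (k - j)
  | 0, j, k, h1, h2 => by
    simp only [runAux] at h2
    have : k = j := le_antisymm h2 h1
    subst this; simp
  | fuel+1, j, k, h1, h2 => by
    simp only [runAux] at h2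
    split at h2
    · rename_i hc
      rcases eq_or_lt_of_le h1 with h | h
      · subst h; simp
      · have := runAux_chain π N fuel (j+1) k h h2
        rw [this, hc.2]; omega
    · have : k = j := le_antisymm h2 h1
      subst this; simp

theorem greedyAux_correct (g : ℕ → ℕ) (N : ℕ) (inp out : ℕ → Bool)
    (h : ∀ k, k < N → out k = inp (g k)) :
    ∀ fuel i, N ≤ fuel + i →
      ((greedyAux g N fuel i).flatMap fun s =>
          (List.range (s.2 - s.1 + 1)).map fun k => inp (g s.1 + k)) =
        (List.range' i (N - i)).map out
  | 0, i, hle => by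
    simp only [greedyAux, List.flatMap_nil]
    have : N - i = 0 := by omega
    rw [this]; simp
  | fuel+1, i, hle => by
    simp only [greedyAux]
    split
    · rename_i hi
      set r := runAux g N (N - i) i with hr
      have hir : i ≤ r := runAux_le g N _ i
      have hrN : r < N := runAux_lt g N _ i hi
      rw [List.flatMap_cons]
      rw [greedyAux_correct g N inp out h fuel (r+1) (by omega)]
      have hseg : ((List.range (r - i + 1)).map fun k => inp (g i + k)) =
          (List.range' i (r - i + 1)).map out := by
        rw [show (List.range' i (r - i + 1)) = List.map (fun k => i + k)
            (List.range (r - i + 1)) from by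
          rw [List.range_eq_range', List.map_add_range']; simp, List.map_map]
        apply List.map_congr_left
        intro k hk
        rw [List.mem_range] at hk
        have hik : i + k < N := by omega
        have := runAux_chain g N (N - i) i (i + k) (by omega) (by omega)
        simp only [Function.comp]
        rw [h (i + k) hik, this]
        congr 1; omega
      rw [hseg]
      have heq : List.range' i (r - i + 1) ++ List.range' (r + 1) (N - (r + 1)) =
          List.range' i (N - i) := by
        rw [show r + 1 = i + (r - i + 1) by omega, List.range'_append_1]
        congr 1; omega
      rw [← heq, List.map_append]
    · rename_i hi
      have : N - i = 0 := by omega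
      rw [this]; simp

/-- The list of segments emitted by the greedy grouping of `π` on `[0, N)`. -/
def greedy (π : ℕ → ℕ) (N : ℕ) : List (ℕ × ℕ) := greedyAux π N N 0

/-- View a map `Fin N → Fin N` as a map on natural-number indices below `N`. -/
def liftPerm {N : ℕ} (π : Fin N → Fin N) : ℕ → ℕ :=
  fun k => if h : k < N then (π ⟨k, h⟩ : Fin N).1 else k

/-- Phase 3 (emission) correctness: concatenating, in index order, the slices
`in[π iₖ .. π jₖ]` over the segments `[iₖ, jₖ]` emitted by the greedy grouping
of a bijection `π` reconstructs the output vector `out`, where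
`out i = in (π i)`. Vectors are represented as their lists of bits, indexed
from bit 0 to bit N−1. -/
theorem greedy_emission_correct {N : ℕ}
    (π : Fin N → Fin N) (hπ : Function.Bijective π)
    (inp out : ℕ → Bool) (hout : ∀ k, k < N → out k = inp (liftPerm π k)) :
    ((greedy (liftPerm π) N).flatMap fun s =>
        (List.range (s.2 - s.1 + 1)).map fun k => inp (liftPerm π s.1 + k)) =
      (List.range N).map out := by
  have h := greedyAux_correct (liftPerm π) N inp out hout N 0 (by omega)
  simpa [greedy, List.range_eq_range'] using h
end

section
/- Inlining a submodule instance preserves circuit semantics: if a module instance computes output o = F(x) for input x, and the instantiation is replaced by a copy of the module body with the instance's actual input and output wires substituted for the formal ports, then every output of the enclosing module computes the same Boolean function of the enclosing module's inputs as before. -/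
section Inlining

variable {V W : Type*} {k : ℕ}

/-- A valuation `x` of the enclosing module `M` is consistent when every
non-input node carries the value of its local Boolean function `fn`; in
particular the instance node `inst` carries `F` applied to the values of its
actual operand wires `args`. (The constraint on `inst` is recorded by the
hypothesis `fn inst x = F (fun t => x (args t))` below.) -/
def MConsistent (I : Set V) (fn : V → (V → Bool) → Bool) (x : V → Bool) :
    Prop :=
  ∀ v, v ∉ I → x v = fn v x

/-- A valuation `y` of the submodule `S` is consistent when every non-input
node of `S` carries the value of its local Boolean function `gn`. -/
def SConsistent (sIn : Fin k → W) (gn : W → (W → Bool) → Bool)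
    (y : W → Bool) : Prop :=
  ∀ w, (∀ t, w ≠ sIn t) → y w = gn w y

/-- A valuation `z` of the inlined circuit (on node set `V ⊕ W`) is consistent
when: the copied nodes of `V` other than the instance node still follow `fn`;
the instance's result wire carries the value of the copied output node of `S`;
each copied input node of `S` carries the value of the corresponding actual
operand wire of the instance; and all other copied nodes of `S` follow `gn`. -/
def InlinedConsistent (I : Set V) (fn : V → (V → Bool) → Bool)
    (inst : V) (args : Fin k → V) (sIn : Fin k → W) (sOut : W)
    (gn : W → (W → Bool) → Bool) (z : V ⊕ W → Bool) : Prop :=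
  (∀ v, v ∉ I → v ≠ inst → z (Sum.inl v) = fn v (fun u => z (Sum.inl u))) ∧
  z (Sum.inl inst) = z (Sum.inr sOut) ∧
  (∀ t, z (Sum.inr (sIn t)) = z (Sum.inl (args t))) ∧
  (∀ w, (∀ t, w ≠ sIn t) → z (Sum.inr w) = gn w (fun u => z (Sum.inr u)))

/-- Inlining preserves circuit semantics: let `M` be a finite combinational
(DAG) circuit — so that consistent valuations of `M` are determined by the
values of its inputs `I` — containing an instance node `inst` whose semantics
is the function `F` computed by submodule `S` (a circuit with formal input
ports `sIn`, output port `sOut`, and local functions `gn`), applied to the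
instance's actual operand wires `args`.  If the instance is replaced by a
fresh copy of `S`'s body, with the actual input and output wires substituted
for the formal ports, then every output node `out` of `M` computes the same
Boolean function of `M`'s inputs as before: any consistent valuation `z` of
the inlined circuit agreeing on the inputs with a consistent valuation `x` of
the original circuit also agrees with it on `out`. -/
theorem inlining_preserves_semantics
    (I : Set V) (fn : V → (V → Bool) → Bool) (inst : V) (hinst : inst ∉ I)
    (args : Fin k → V) (F : (Fin k → Bool) → Bool)
    (hinstSem : ∀ x : V → Bool, fn inst x = F (fun t => x (args t)))
    (sIn : Fin k → W) (sOut : W) (gn : W → (W → Bool) → Bool)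
    (hS : ∀ y : W → Bool, SConsistent sIn gn y →
      y sOut = F (fun t => y (sIn t)))
    (hdet : ∀ x₁ x₂ : V → Bool, MConsistent I fn x₁ → MConsistent I fn x₂ →
      (∀ v ∈ I, x₁ v = x₂ v) → x₁ = x₂)
    (out : V) (x : V → Bool) (hx : MConsistent I fn x)
    (z : V ⊕ W → Bool)
    (hz : InlinedConsistent I fn inst args sIn sOut gn z)
    (hagree : ∀ v ∈ I, z (Sum.inl v) = x v) :
    z (Sum.inl out) = x out := by
  obtain ⟨h1, h2, h3, h4⟩ := hz
  have hx' : MConsistent I fn (fun v => z (Sum.inl v)) := by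
    intro v hv
    by_cases hvi : v = inst
    · subst hvi
      show z (Sum.inl v) = _
      rw [h2, hS (fun w => z (Sum.inr w)) h4, hinstSem]
      congr 1; funext t; exact h3 t
    · exact h1 v hv hvi
  have := hdet _ x hx' hx hagree
  exact congrFun this out

end Inlining
end
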